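/- Consider on ℝ³ (coordinates x¹, x², x³) the metric ḡ with diagonal components ḡ_{11} = e^{x²}, ḡ_{22} = e^{x¹}, ḡ_{33} = 1 and vanishing off-diagonal components. Then: (a) up to the standard symmetries of the curvature tensor, the only nonvanishing component of its (0,4) Riemann–Christoffel curvature tensor is R̄_{1212} = −¼(e^{x¹} + e^{x²}); (b) the only nonvanishing components of the covariant derivative of the curvature tensor are those determined (via curvature symmetries) by R̄_{1212,1} = e^{x²}/4 and R̄_{1212,2} = e^{x¹}/4, so in particular the metric is not locally symmetric; (c) with the 1-form Π̄ = (−e^{x²}/(e^{x¹} + e^{x²}), −e^{x¹}/(e^{x¹} + e^{x²}), 0), the metric is recurrent: R̄_{ijkl,m} = Π̄_m R̄_{ijkl} for all indices i,j,k,l,m ∈ {1,2,3}. -/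

import Mathlib

/-!
The curvature of `ḡ` lives in the `x¹x²`-plane: `R̄ = f · (ε ⊗ ε)` with `ε = dx¹ ∧ dx²` and
`f = -¼(e^{x¹} + e^{x²})`. The Christoffel symbols give `∇ε = -τ ⊗ ε` with `τ = ½(dx¹ + dx²)`,
so by the Leibniz rule `∇R̄ = (df - 2fτ) ⊗ (ε ⊗ ε)`, and `df - 2fτ = Π̄ f`.
-/

noncomputable section

/-- Partial derivative of a scalar function along the `j`-th coordinate direction. -/
def pd {k : ℕ} (F : (Fin k → ℝ) → ℝ) (j : Fin k) (x : Fin k → ℝ) : ℝ :=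
  fderiv ℝ F x (Pi.single j 1)

/-- Christoffel symbols `Γ^i_{jl}` of a metric `h` with (pointwise) inverse `hinv`. -/
def Christoffel {k : ℕ} (h hinv : (Fin k → ℝ) → Fin k → Fin k → ℝ)
    (i j l : Fin k) (x : Fin k → ℝ) : ℝ :=
  (1 / 2) * ∑ r, hinv x i r *
    (pd (fun y => h y r l) j x + pd (fun y => h y j r) l x - pd (fun y => h y j l) r x)

/-- The (0,4) Riemann-Christoffel curvature tensor of `h`. -/
def Riem {k : ℕ} (h hinv : (Fin k → ℝ) → Fin k → Fin k → ℝ)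
    (x : Fin k → ℝ) (i j s l : Fin k) : ℝ :=
  ∑ r, h x i r *
    (pd (Christoffel h hinv r l j) s x - pd (Christoffel h hinv r s j) l x
      + (∑ t, Christoffel h hinv r s t x * Christoffel h hinv t l j x)
      - ∑ t, Christoffel h hinv r l t x * Christoffel h hinv t s j x)

/-- The Ricci tensor of `h`. -/
def Ric {k : ℕ} (h hinv : (Fin k → ℝ) → Fin k → Fin k → ℝ)
    (x : Fin k → ℝ) (j l : Fin k) : ℝ :=
  ∑ i, ∑ s, hinv x i s * Riem h hinv x i j s l

/-- The scalar curvature of `h`. -/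
def Scal {k : ℕ} (h hinv : (Fin k → ℝ) → Fin k → Fin k → ℝ) (x : Fin k → ℝ) : ℝ :=
  ∑ j, ∑ l, hinv x j l * Ric h hinv x j l

/-- Covariant derivative (w.r.t. the Levi-Civita connection of `h`) of a (0,4) tensor field. -/
def cov4 {k : ℕ} (h hinv : (Fin k → ℝ) → Fin k → Fin k → ℝ)
    (T : (Fin k → ℝ) → Fin k → Fin k → Fin k → Fin k → ℝ)
    (x : Fin k → ℝ) (i j s l m : Fin k) : ℝ :=
  pd (fun y => T y i j s l) m x
    - (∑ r, Christoffel h hinv r m i x * T x r j s l)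
    - (∑ r, Christoffel h hinv r m j x * T x i r s l)
    - (∑ r, Christoffel h hinv r m s x * T x i j r l)
    - ∑ r, Christoffel h hinv r m l x * T x i j s r

/-- Covariant derivative of a (0,2) tensor field. -/
def cov2 {k : ℕ} (h hinv : (Fin k → ℝ) → Fin k → Fin k → ℝ)
    (T : (Fin k → ℝ) → Fin k → Fin k → ℝ) (x : Fin k → ℝ) (i j m : Fin k) : ℝ :=
  pd (fun y => T y i j) m x
    - (∑ r, Christoffel h hinv r m i x * T x r j)
    - ∑ r, Christoffel h hinv r m j x * T x i r

/-- Kulkarni-Nomizu product of two (0,2) tensors. -/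
def KN {k : ℕ} (A E : (Fin k → ℝ) → Fin k → Fin k → ℝ)
    (x : Fin k → ℝ) (i j s l : Fin k) : ℝ :=
  A x i l * E x j s + A x j s * E x i l - A x i s * E x j l - A x j l * E x i s

/-- The Gaussian curvature tensor `G_{ijsl} = h_{il}h_{js} - h_{is}h_{jl}`. -/
def Gt {k : ℕ} (h : (Fin k → ℝ) → Fin k → Fin k → ℝ)
    (x : Fin k → ℝ) (i j s l : Fin k) : ℝ :=
  h x i l * h x j s - h x i s * h x j l

/-- The conformal (Weyl) curvature tensor of a `k`-dimensional metric `h`. -/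
def Weyl {k : ℕ} (h hinv : (Fin k → ℝ) → Fin k → Fin k → ℝ)
    (x : Fin k → ℝ) (i j s l : Fin k) : ℝ :=
  Riem h hinv x i j s l - (1 / ((k : ℝ) - 2)) * KN h (Ric h hinv) x i j s l
    + (Scal h hinv x / (2 * ((k : ℝ) - 1) * ((k : ℝ) - 2))) * KN h h x i j s l

/-- Recurrency condition at a point. -/
def Recur {k : ℕ} (h hinv : (Fin k → ℝ) → Fin k → Fin k → ℝ)
    (piF : (Fin k → ℝ) → Fin k → ℝ) (x : Fin k → ℝ) : Prop :=
  ∀ i j s l m, cov4 h hinv (Riem h hinv) x i j s l m = piF x m * Riem h hinv x i j s l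

/-- Hyper generalized recurrency condition at a point. -/
def HGK {k : ℕ} (h hinv : (Fin k → ℝ) → Fin k → Fin k → ℝ)
    (piF psiF : (Fin k → ℝ) → Fin k → ℝ) (x : Fin k → ℝ) : Prop :=
  ∀ i j s l m, cov4 h hinv (Riem h hinv) x i j s l m =
    piF x m * Riem h hinv x i j s l + psiF x m * KN h (Ric h hinv) x i j s l

/-- Weakly generalized recurrency condition at a point. -/
def WGK {k : ℕ} (h hinv : (Fin k → ℝ) → Fin k → Fin k → ℝ)
    (piF phiF : (Fin k → ℝ) → Fin k → ℝ) (x : Fin k → ℝ) : Prop :=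
  ∀ i j s l m, cov4 h hinv (Riem h hinv) x i j s l m =
    piF x m * Riem h hinv x i j s l
      + phiF x m * KN (Ric h hinv) (Ric h hinv) x i j s l

/-- Super generalized recurrency condition at a point. -/
def SGK {k : ℕ} (h hinv : (Fin k → ℝ) → Fin k → Fin k → ℝ)
    (piF phiF psiF thetaF : (Fin k → ℝ) → Fin k → ℝ) (x : Fin k → ℝ) : Prop :=
  ∀ i j s l m, cov4 h hinv (Riem h hinv) x i j s l m =
    piF x m * Riem h hinv x i j s l
      + phiF x m * KN (Ric h hinv) (Ric h hinv) x i j s l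
      + psiF x m * KN h (Ric h hinv) x i j s l
      + thetaF x m * KN h h x i j s l

/-- The metric of Example 1 (base): diag(e^{x²}, e^{x¹}, 1) on ℝ³. -/
def g3 : (Fin 3 → ℝ) → Fin 3 → Fin 3 → ℝ := fun x i j =>
  if i = 0 ∧ j = 0 then Real.exp (x 1)
  else if i = 1 ∧ j = 1 then Real.exp (x 0)
  else if i = 2 ∧ j = 2 then 1
  else 0

/-- The inverse of the metric `g3`. -/
def g3inv : (Fin 3 → ℝ) → Fin 3 → Fin 3 → ℝ := fun x i j =>
  if i = 0 ∧ j = 0 then Real.exp (-x 1)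
  else if i = 1 ∧ j = 1 then Real.exp (-x 0)
  else if i = 2 ∧ j = 2 then 1
  else 0

/-- The associated 1-form of recurrency of Example 1. -/
def pi3 : (Fin 3 → ℝ) → Fin 3 → ℝ := fun x m =>
  if m = 0 then -Real.exp (x 1) / (Real.exp (x 0) + Real.exp (x 1))
  else if m = 1 then -Real.exp (x 0) / (Real.exp (x 0) + Real.exp (x 1))
  else 0

section PartialDerivative

variable {k : ℕ} {F G : (Fin k → ℝ) → ℝ} {x : Fin k → ℝ} (j : Fin k)

@[simp] lemma pd_const (c : ℝ) : pd (fun _ => c) j x = 0 := by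
  simp [pd]

@[simp] lemma pd_coord (a : Fin k) : pd (fun y => y a) j x = (Pi.single j 1 : Fin k → ℝ) a := by
  simp [pd, fderiv_apply]

@[simp] lemma pd_neg : pd (fun y => -F y) j x = -pd F j x := by
  simp [pd]

@[simp] lemma pd_const_mul (c : ℝ) : pd (fun y => c * F y) j x = c * pd F j x := by
  have h : (fun y => c * F y) = c • F := rfl
  simp [pd, h, fderiv_const_smul_field]

@[simp] lemma pd_div_const (c : ℝ) : pd (fun y => F y / c) j x = pd F j x / c := by
  simp_rw [div_eq_inv_mul, pd_const_mul]

lemma pd_add (hF : DifferentiableAt ℝ F x) (hG : DifferentiableAt ℝ G x) :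
    pd (fun y => F y + G y) j x = pd F j x + pd G j x := by
  simp [pd, fderiv_fun_add hF hG]

lemma pd_sub (hF : DifferentiableAt ℝ F x) (hG : DifferentiableAt ℝ G x) :
    pd (fun y => F y - G y) j x = pd F j x - pd G j x := by
  simp [pd, fderiv_fun_sub hF hG]

lemma pd_mul (hF : DifferentiableAt ℝ F x) (hG : DifferentiableAt ℝ G x) :
    pd (fun y => F y * G y) j x = pd F j x * G x + F x * pd G j x := by
  simp [pd, fderiv_fun_mul hF hG]
  ring

lemma pd_exp (hF : DifferentiableAt ℝ F x) :
    pd (fun y => Real.exp (F y)) j x = Real.exp (F x) * pd F j x := by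
  simp [pd, hF.hasFDerivAt.exp.fderiv]

end PartialDerivative

section Leibniz

variable {k : ℕ} (h hinv : (Fin k → ℝ) → Fin k → Fin k → ℝ) {f : (Fin k → ℝ) → ℝ}
  {x : Fin k → ℝ}

lemma cov4_mul_tensorProduct {A B : (Fin k → ℝ) → Fin k → Fin k → ℝ}
    (hf : DifferentiableAt ℝ f x) (hA : ∀ i j, DifferentiableAt ℝ (fun y => A y i j) x)
    (hB : ∀ i j, DifferentiableAt ℝ (fun y => B y i j) x) (i j s l m : Fin k) :
    cov4 h hinv (fun y i j s l => f y * (A y i j * B y s l)) x i j s l m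
      = pd f m x * (A x i j * B x s l)
        + f x * (cov2 h hinv A x i j m * B x s l + A x i j * cov2 h hinv B x s l m) := by
  have hAB : DifferentiableAt ℝ (fun y => A y i j * B y s l) x := (hA i j).mul (hB s l)
  rw [cov4, cov2, cov2, pd_mul _ hf hAB, pd_mul _ (hA i j) (hB s l)]
  simp only [Finset.mul_sum, Finset.sum_mul, mul_sub, sub_mul, mul_add]
  ring_nf

lemma cov4_mul_tensorProduct_self_of_cov2 {C : Fin k → Fin k → ℝ} {m : Fin k} {σ : ℝ}
    (hf : DifferentiableAt ℝ f x) (hC : ∀ i j, cov2 h hinv (fun _ => C) x i j m = σ * C i j)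
    (i j s l : Fin k) :
    cov4 h hinv (fun y i j s l => f y * (C i j * C s l)) x i j s l m
      = (pd f m x + 2 * σ * f x) * (C i j * C s l) := by
  rw [cov4_mul_tensorProduct h hinv (A := fun _ => C) (B := fun _ => C) hf
    (fun _ _ => differentiableAt_const _) (fun _ _ => differentiableAt_const _), hC, hC]
  ring

end Leibniz

def g3Christoffel (x : Fin 3 → ℝ) (i j l : Fin 3) : ℝ :=
  if i = 0 ∧ j = 1 ∧ l = 1 then -Real.exp (x 0 - x 1) / 2
  else if i = 1 ∧ j = 0 ∧ l = 0 then -Real.exp (x 1 - x 0) / 2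
  else if (i = 0 ∨ i = 1) ∧ ((j = 0 ∧ l = 1) ∨ (j = 1 ∧ l = 0)) then 1 / 2
  else 0

lemma christoffel_g3 (i j l : Fin 3) (x : Fin 3 → ℝ) :
    Christoffel g3 g3inv i j l x = g3Christoffel x i j l := by
  fin_cases i <;> fin_cases j <;> fin_cases l <;>
    simp (disch := fun_prop) [Christoffel, g3, g3inv, g3Christoffel, pd_exp,
      Pi.single_apply, Real.exp_sub, Real.exp_neg] <;>
    field_simp

-- `dx¹ ∧ dx²`: the paper's coordinates `x¹, x², x³` are `x 0, x 1, x 2` here.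
def areaForm (a b : Fin 3) : ℝ :=
  if a = 0 ∧ b = 1 then 1 else if a = 1 ∧ b = 0 then -1 else 0

def g3Curv (x : Fin 3 → ℝ) : ℝ := -(1 / 4) * (Real.exp (x 0) + Real.exp (x 1))

lemma riem_g3 (x : Fin 3 → ℝ) (i j s l : Fin 3) :
    Riem g3 g3inv x i j s l = g3Curv x * (areaForm i j * areaForm s l) := by
  have hΓ : Christoffel g3 g3inv = fun r a b y => g3Christoffel y r a b := by
    funext r a b y
    exact christoffel_g3 r a b y
  simp only [Riem, hΓ, Fin.sum_univ_three]
  fin_cases i <;> fin_cases j <;> fin_cases s <;> fin_cases l <;>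
    simp (disch := fun_prop) [g3Christoffel, g3, areaForm, g3Curv, pd_exp, pd_sub] <;>
    simp [Real.exp_sub] <;> field_simp <;> ring

lemma cov2_g3_areaForm (x : Fin 3 → ℝ) (i j m : Fin 3) :
    cov2 g3 g3inv (fun _ => areaForm) x i j m = -(if m = 2 then 0 else 1 / 2) * areaForm i j := by
  simp only [cov2, christoffel_g3, Fin.sum_univ_three, pd_const]
  fin_cases i <;> fin_cases j <;> fin_cases m <;> simp [g3Christoffel, areaForm]

lemma pd_g3Curv_add_eq_pi3_mul (x : Fin 3 → ℝ) (m : Fin 3) :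
    pd g3Curv m x + 2 * (-(if m = 2 then 0 else 1 / 2)) * g3Curv x = pi3 x m * g3Curv x := by
  have hd : pd g3Curv m x = -(1 / 4) * (Real.exp (x 0) * (Pi.single m 1 : Fin 3 → ℝ) 0
      + Real.exp (x 1) * (Pi.single m 1 : Fin 3 → ℝ) 1) := by
    unfold g3Curv
    rw [pd_const_mul, pd_add _ (by fun_prop) (by fun_prop),
      pd_exp _ (by fun_prop), pd_exp _ (by fun_prop), pd_coord, pd_coord]
  rw [hd]
  fin_cases m <;> simp [pi3, g3Curv] <;> field_simp <;> ring

lemma recur_g3 (x : Fin 3 → ℝ) : Recur g3 g3inv pi3 x := by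
  have hR : Riem g3 g3inv = fun y i j s l => g3Curv y * (areaForm i j * areaForm s l) := by
    funext y i j s l
    exact riem_g3 y i j s l
  intro i j s l m
  rw [hR, cov4_mul_tensorProduct_self_of_cov2 g3 g3inv (by unfold g3Curv; fun_prop)
    (cov2_g3_areaForm x · · m), pd_g3Curv_add_eq_pi3_mul, mul_assoc]

lemma areaForm_mul_eq_zero {i j s l : Fin 3}
    (h : ¬ (((i = 0 ∧ j = 1) ∨ (i = 1 ∧ j = 0)) ∧ ((s = 0 ∧ l = 1) ∨ (s = 1 ∧ l = 0)))) :
    areaForm i j * areaForm s l = 0 := by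
  rcases not_and_or.mp h with h | h
  · simp [areaForm, not_or.mp h]
  · simp [areaForm, not_or.mp h]

/-- Example 1 (base manifold): the metric `e^{x²}(dx¹)² + e^{x¹}(dx²)² + (dx³)²` on ℝ³ has
`R_{1212} = -(e^{x¹}+e^{x²})/4` as its only nonvanishing curvature component up to symmetry,
its only nonvanishing components of `∇R` are determined by `R_{1212,1} = e^{x²}/4` and
`R_{1212,2} = e^{x¹}/4` (so it is not locally symmetric), and it is recurrent with associated
1-form `pi3`. -/
theorem example_base_recurrent :
    (∀ x : Fin 3 → ℝ,
      Riem g3 g3inv x 0 1 0 1 = -(1 / 4) * (Real.exp (x 0) + Real.exp (x 1)))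
    ∧ (∀ x : Fin 3 → ℝ, ∀ i j k l : Fin 3,
        ¬ (((i = 0 ∧ j = 1) ∨ (i = 1 ∧ j = 0)) ∧ ((k = 0 ∧ l = 1) ∨ (k = 1 ∧ l = 0))) →
        Riem g3 g3inv x i j k l = 0)
    ∧ (∀ x : Fin 3 → ℝ,
        cov4 g3 g3inv (Riem g3 g3inv) x 0 1 0 1 0 = Real.exp (x 1) / 4)
    ∧ (∀ x : Fin 3 → ℝ,
        cov4 g3 g3inv (Riem g3 g3inv) x 0 1 0 1 1 = Real.exp (x 0) / 4)
    ∧ (∀ x : Fin 3 → ℝ, ∀ i j k l m : Fin 3,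
        ¬ ((((i = 0 ∧ j = 1) ∨ (i = 1 ∧ j = 0)) ∧ ((k = 0 ∧ l = 1) ∨ (k = 1 ∧ l = 0)))
            ∧ (m = 0 ∨ m = 1)) →
        cov4 g3 g3inv (Riem g3 g3inv) x i j k l m = 0)
    ∧ ¬ (∀ x : Fin 3 → ℝ, ∀ i j k l m : Fin 3, cov4 g3 g3inv (Riem g3 g3inv) x i j k l m = 0)
    ∧ (∀ x : Fin 3 → ℝ, ∀ i j k l m : Fin 3,
        cov4 g3 g3inv (Riem g3 g3inv) x i j k l m = pi3 x m * Riem g3 g3inv x i j k l) := by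
  have hcov4_0 (x : Fin 3 → ℝ) : cov4 g3 g3inv (Riem g3 g3inv) x 0 1 0 1 0 = Real.exp (x 1) / 4 := by
    rw [recur_g3, riem_g3]
    simp [pi3, areaForm, g3Curv]
    field_simp
  refine ⟨fun x => ?_, fun x i j k l h => ?_, hcov4_0, fun x => ?_, fun x i j k l m h => ?_,
    fun h => ?_, recur_g3⟩
  · simp [riem_g3, areaForm, g3Curv]
  · rw [riem_g3, areaForm_mul_eq_zero h, mul_zero]
  · rw [recur_g3, riem_g3]
    simp [pi3, areaForm, g3Curv]
    field_simp
  · rw [recur_g3, riem_g3]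
    by_cases hεε : ((i = 0 ∧ j = 1) ∨ (i = 1 ∧ j = 0)) ∧ ((k = 0 ∧ l = 1) ∨ (k = 1 ∧ l = 0))
    · have hm : m = 2 := by omega
      simp [hm, pi3]
    · rw [areaForm_mul_eq_zero hεε, mul_zero, mul_zero]
  · have := hcov4_0 0
    rw [h] at this
    norm_num at this
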